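/- arXiv:1809.03469 — 3 statements merged into one kernel-verified Lean document; each statement's English description precedes it below -/
import Mathlib

section
/- Let f be holomorphic on the punctured unit disk, let t be a real number, and suppose ∫ |f(z)|² |z|^(-2t) dA(z) < ∞ over the punctured disk. Then for every integer n with n ≤ t - 1, the n-th Laurent coefficient of f at 0 vanishes. -/
open MeasureTheory Set Real

open scoped ENNReal

/-!
The coefficient `c = ∮_{|z|=s} f(z) z^(-n-1) dz` does not depend on `s ∈ (0, 1)`, by Cauchy's
theorem on annuli. On the circle `|z^(-n-1) dz| = s^(-n) dθ`, so Cauchy–Schwarz in `θ` gives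
`‖c‖² ≤ 2π s^(-2n) ∫ |f(s e^(iθ))|² dθ`. Multiplying by `s^(2n+1-2t)` and integrating over
`s ∈ (0, 1)`, the right-hand side becomes `2π ∫ |f|² |z|^(-2t) dA < ∞` in polar coordinates,
whereas `∫₀¹ s^(2n+1-2t) ds = ∞` since `2n + 1 - 2t ≤ -1`. Hence `c = 0`.
-/

lemma sq_lintegral_le_measure_univ_mul_lintegral_sq {α : Type*} [MeasurableSpace α]
    {μ : Measure α} {h : α → ℝ≥0∞} (hh : AEMeasurable h μ) :
    (∫⁻ x, h x ∂μ) ^ 2 ≤ μ univ * ∫⁻ x, h x ^ 2 ∂μ := by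
  have hCS := ENNReal.lintegral_mul_le_Lp_mul_Lq μ Real.HolderConjugate.two_two hh
    aemeasurable_const (g := 1)
  simp only [Pi.mul_apply, Pi.one_apply, mul_one, ENNReal.one_rpow, lintegral_const,
    one_mul] at hCS
  calc (∫⁻ x, h x ∂μ) ^ 2 ≤ ((∫⁻ x, h x ^ (2 : ℝ) ∂μ) ^ (1 / 2 : ℝ) * μ univ ^ (1 / 2 : ℝ)) ^ 2 :=
        pow_le_pow_left' hCS 2
    _ = μ univ * ∫⁻ x, h x ^ 2 ∂μ := by
        rw [mul_pow, ← ENNReal.rpow_natCast, ← ENNReal.rpow_natCast _ 2, ← ENNReal.rpow_mul,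
          ← ENNReal.rpow_mul]
        norm_num [mul_comm]

lemma eq_zero_of_mul_le_of_lintegral_eq_top {α : Type*} [MeasurableSpace α] {μ : Measure α}
    {a C : ℝ≥0∞} {w h : α → ℝ≥0∞} (hle : ∀ᵐ x ∂μ, a * w x ≤ C * h x)
    (hw : ∫⁻ x, w x ∂μ = ∞) (hh : ∫⁻ x, h x ∂μ < ∞) (hC : C ≠ ∞) : a = 0 := by
  by_contra ha
  have : a * ∫⁻ x, w x ∂μ ≤ C * ∫⁻ x, h x ∂μ :=
    (lintegral_const_mul_le a w).trans <|
      (lintegral_mono_ae hle).trans_eq (lintegral_const_mul' C h hC)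
  rw [hw, ENNReal.mul_top ha, top_le_iff] at this
  exact (ENNReal.mul_lt_top hC.lt_top hh).ne this

lemma lintegral_Ioo_rpow_eq_top {a : ℝ} (ha : a ≤ -1) :
    ∫⁻ r in Ioo (0 : ℝ) 1, ENNReal.ofReal (r ^ a) = ∞ := by
  by_contra h
  have hint : IntegrableOn (fun r : ℝ => r ^ a) (Ioo 0 1) := by
    refine ⟨?_, (hasFiniteIntegral_iff_ofReal ?_).2 (lt_top_iff_ne_top.2 h)⟩
    · exact (continuousOn_id.rpow_const fun r hr => Or.inl hr.1.ne').aestronglyMeasurable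
        measurableSet_Ioo
    · exact (ae_restrict_iff' measurableSet_Ioo).2 (ae_of_all _ fun r hr => rpow_nonneg hr.1.le a)
  linarith [(intervalIntegral.integrableOn_Ioo_rpow_iff one_pos).1 hint]

lemma circleIntegral_eq_of_differentiableOn_punctured_ball {E : Type*} [NormedAddCommGroup E]
    [NormedSpace ℂ E] [CompleteSpace E] {g : ℂ → E} {R r s : ℝ}
    (hg : DifferentiableOn ℂ g {z : ℂ | 0 < ‖z‖ ∧ ‖z‖ < R})
    (hr : 0 < r) (hrR : r < R) (hs : 0 < s) (hsR : s < R) :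
    (∮ z in C(0, r), g z) = ∮ z in C(0, s), g z := by
  wlog hrs : r ≤ s generalizing r s
  · exact (this hs hsR hr hrR (le_of_not_ge hrs)).symm
  have hopen : IsOpen {z : ℂ | 0 < ‖z‖ ∧ ‖z‖ < R} :=
    (isOpen_lt continuous_const continuous_norm).inter (isOpen_lt continuous_norm continuous_const)
  have hsub : Metric.closedBall (0 : ℂ) s \ Metric.ball 0 r ⊆ {z : ℂ | 0 < ‖z‖ ∧ ‖z‖ < R} := by
    rintro z ⟨hzs, hzr⟩
    simp only [Metric.mem_closedBall, Metric.mem_ball, dist_zero_right, not_lt] at hzs hzr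
    exact ⟨hr.trans_le hzr, hzs.trans_lt hsR⟩
  refine (Complex.circleIntegral_eq_of_differentiable_on_annulus_off_countable hr hrs
    countable_empty (hg.continuousOn.mono hsub) fun z hz => ?_).symm
  refine hg.differentiableAt (hopen.mem_nhds (hsub ?_))
  exact ⟨Metric.ball_subset_closedBall hz.1.1, fun h => hz.1.2 (Metric.ball_subset_closedBall h)⟩

/- The angular range `(-π, π)` is the one of `Complex.polarCoord`. -/
lemma enorm_circleIntegral_le_lintegral {E : Type*} [NormedAddCommGroup E] [NormedSpace ℂ E]
    (g : ℂ → E) {s : ℝ} (hs : 0 ≤ s) :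
    ‖∮ z in C(0, s), g z‖ₑ ≤ ENNReal.ofReal s * ∫⁻ θ in Ioo (-π) π, ‖g (circleMap 0 s θ)‖ₑ := by
  have hper : Function.Periodic
      (fun θ => deriv (circleMap 0 s) θ • g (circleMap 0 s θ)) (2 * π) := fun θ => by
    simp only [deriv_circleMap, periodic_circleMap 0 s θ]
  calc ‖∮ z in C(0, s), g z‖ₑ
      = ‖∫ θ in -π..-π + 2 * π, deriv (circleMap 0 s) θ • g (circleMap 0 s θ)‖ₑ := by
        rw [circleIntegral, hper.intervalIntegral_add_eq (-π) 0, zero_add]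
    _ ≤ ∫⁻ θ in Ioc (-π) π, ‖deriv (circleMap 0 s) θ • g (circleMap 0 s θ)‖ₑ := by
        rw [intervalIntegral.integral_of_le (by linarith [pi_pos]), show -π + 2 * π = π by ring]
        exact enorm_integral_le_lintegral_enorm _
    _ = ∫⁻ θ in Ioo (-π) π, ENNReal.ofReal s * ‖g (circleMap 0 s θ)‖ₑ := by
        rw [Measure.restrict_congr_set Ioo_ae_eq_Ioc.symm]
        refine lintegral_congr fun θ => ?_
        rw [enorm_smul, ← ofReal_norm, deriv_circleMap, norm_mul, Complex.norm_I, mul_one,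
          norm_circleMap_zero, abs_of_nonneg hs]
    _ = _ := lintegral_const_mul' _ _ ENNReal.ofReal_ne_top

lemma sq_enorm_circleIntegral_mul_zpow_le {g : ℂ → ℂ} {s : ℝ} (hs : 0 < s)
    (hg : ContinuousOn g (Metric.sphere 0 s)) (n : ℤ) :
    ‖∮ z in C(0, s), g z * z ^ (-n - 1)‖ₑ ^ 2 ≤
      ENNReal.ofReal (2 * π * s ^ (-2 * n : ℝ)) *
        ∫⁻ θ in Ioo (-π) π, ‖g (circleMap 0 s θ)‖ₑ ^ 2 := by
  have hnorm (θ : ℝ) : ‖circleMap 0 s θ‖ = s := by rw [norm_circleMap_zero, abs_of_pos hs]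
  have hcont : Continuous fun θ => ‖g (circleMap 0 s θ)‖ₑ :=
    continuous_enorm.comp <| hg.comp_continuous (continuous_circleMap 0 s)
      fun θ => circleMap_mem_sphere 0 hs.le θ
  have hL1 : ‖∮ z in C(0, s), g z * z ^ (-n - 1)‖ₑ ≤
      ENNReal.ofReal (s ^ (-n)) * ∫⁻ θ in Ioo (-π) π, ‖g (circleMap 0 s θ)‖ₑ := by
    calc _ ≤ ENNReal.ofReal s * ∫⁻ θ in Ioo (-π) π,
          ENNReal.ofReal (s ^ (-n - 1)) * ‖g (circleMap 0 s θ)‖ₑ := by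
          refine (enorm_circleIntegral_le_lintegral _ hs.le).trans_eq ?_
          congr 1
          refine lintegral_congr fun θ => ?_
          rw [enorm_mul, mul_comm, ← ofReal_norm (_ ^ _), norm_zpow, hnorm]
      _ = _ := by
          rw [lintegral_const_mul' _ _ ENNReal.ofReal_ne_top, ← mul_assoc,
            ← ENNReal.ofReal_mul hs.le, ← zpow_one_add₀ hs.ne', add_sub_cancel]
  calc _ ≤ (ENNReal.ofReal (s ^ (-n)) * ∫⁻ θ in Ioo (-π) π, ‖g (circleMap 0 s θ)‖ₑ) ^ 2 :=
        pow_le_pow_left' hL1 2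
    _ ≤ ENNReal.ofReal (s ^ (-n)) ^ 2 *
          (volume (Ioo (-π) π) * ∫⁻ θ in Ioo (-π) π, ‖g (circleMap 0 s θ)‖ₑ ^ 2) := by
        rw [mul_pow]
        gcongr
        simpa using sq_lintegral_le_measure_univ_mul_lintegral_sq hcont.aemeasurable
          (μ := volume.restrict (Ioo (-π) π))
    _ = _ := by
        have hpow : (s ^ (-n)) ^ 2 = s ^ (-2 * n : ℝ) := by
          rw [← Real.rpow_intCast, ← Real.rpow_natCast, ← Real.rpow_mul hs.le]
          push_cast
          ring_nf
        rw [Real.volume_Ioo, ← ENNReal.ofReal_pow (zpow_nonneg hs.le _), ← mul_assoc,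
          ← ENNReal.ofReal_mul (by positivity), hpow]
        ring_nf

lemma sq_enorm_circleIntegral_mul_zpow_mul_rpow_le {g : ℂ → ℂ} {s : ℝ} (hs : 0 < s)
    (hg : ContinuousOn g (Metric.sphere 0 s)) (n : ℤ) (t : ℝ) :
    ‖∮ z in C(0, s), g z * z ^ (-n - 1)‖ₑ ^ 2 * ENNReal.ofReal (s ^ (2 * n + 1 - 2 * t)) ≤
      ENNReal.ofReal (2 * π) * (ENNReal.ofReal s *
        ∫⁻ θ in Ioo (-π) π, ‖‖g (circleMap 0 s θ)‖ ^ 2 * ‖circleMap 0 s θ‖ ^ (-2 * t)‖ₑ) := by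
  have hweight (θ : ℝ) : ‖‖g (circleMap 0 s θ)‖ ^ 2 * ‖circleMap 0 s θ‖ ^ (-2 * t)‖ₑ =
      ENNReal.ofReal (s ^ (-2 * t)) * ‖g (circleMap 0 s θ)‖ₑ ^ 2 := by
    rw [norm_circleMap_zero, abs_of_pos hs, enorm_mul, enorm_pow, enorm_norm,
      Real.enorm_of_nonneg (rpow_nonneg hs.le _), mul_comm]
  have hexp :
      2 * π * s ^ (-2 * n : ℝ) * s ^ (2 * n + 1 - 2 * t) = 2 * π * (s * s ^ (-2 * t)) := by
    have hs_mul : s * s ^ (-2 * t) = s ^ (1 + -2 * t) := by rw [rpow_add hs, rpow_one]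
    rw [hs_mul, mul_assoc, ← rpow_add hs]
    ring_nf
  simp_rw [hweight]
  rw [lintegral_const_mul' _ _ ENNReal.ofReal_ne_top]
  calc _ ≤ ENNReal.ofReal (2 * π * s ^ (-2 * n : ℝ)) *
          (∫⁻ θ in Ioo (-π) π, ‖g (circleMap 0 s θ)‖ₑ ^ 2) *
            ENNReal.ofReal (s ^ (2 * n + 1 - 2 * t)) := by
        gcongr
        exact sq_enorm_circleIntegral_mul_zpow_le hs hg n
    _ = _ := by
        rw [mul_right_comm, ← ENNReal.ofReal_mul (by positivity), hexp,
          ENNReal.ofReal_mul (by positivity), ENNReal.ofReal_mul hs.le]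
        ring

lemma Complex.polarCoord_symm_eq_circleMap (p : ℝ × ℝ) :
    Complex.polarCoord.symm p = circleMap 0 p.1 p.2 := by
  simp [Complex.polarCoord_symm_apply, circleMap, Complex.exp_mul_I]

lemma lintegral_Ioo_mul_lintegral_circleMap_le {F : ℂ → ℝ≥0∞} {R : ℝ}
    (hF : ContinuousOn F {z : ℂ | 0 < ‖z‖ ∧ ‖z‖ < R}) :
    ∫⁻ r in Ioo 0 R, ENNReal.ofReal r * ∫⁻ θ in Ioo (-π) π, F (circleMap 0 r θ) ≤
      ∫⁻ z in {z : ℂ | 0 < ‖z‖ ∧ ‖z‖ < R}, F z := by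
  set S := {z : ℂ | 0 < ‖z‖ ∧ ‖z‖ < R}
  have hS : MeasurableSet S := (measurableSet_lt measurable_const measurable_norm).inter
    (measurableSet_lt measurable_norm measurable_const)
  have hmaps : MapsTo (fun p : ℝ × ℝ => circleMap 0 p.1 p.2) (Ioo 0 R ×ˢ Ioo (-π) π) S := by
    rintro ⟨r, θ⟩ ⟨hr, -⟩
    simp only [S, mem_ofPred_eq, norm_circleMap_zero, abs_of_pos hr.1]
    exact hr
  have hmeas : AEMeasurable (fun p : ℝ × ℝ => ENNReal.ofReal p.1 * F (circleMap 0 p.1 p.2))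
      ((volume.restrict (Ioo 0 R)).prod (volume.restrict (Ioo (-π) π))) := by
    rw [Measure.prod_restrict, ← Measure.volume_eq_prod]
    exact (ENNReal.measurable_ofReal.comp measurable_fst).aemeasurable.mul
      ((hF.comp (by fun_prop) hmaps).aemeasurable (measurableSet_Ioo.prod measurableSet_Ioo))
  calc _ = ∫⁻ r in Ioo 0 R, ∫⁻ θ in Ioo (-π) π, ENNReal.ofReal r * F (circleMap 0 r θ) := by
        congr! 2 with r
        exact (lintegral_const_mul' _ _ ENNReal.ofReal_ne_top).symm
    _ = ∫⁻ p in Ioo 0 R ×ˢ Ioo (-π) π, ENNReal.ofReal p.1 * F (circleMap 0 p.1 p.2) := by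
        rw [Measure.volume_eq_prod, ← Measure.prod_restrict]
        exact (lintegral_prod _ hmeas).symm
    _ = ∫⁻ p in Ioo 0 R ×ˢ Ioo (-π) π,
          ENNReal.ofReal p.1 • S.indicator F (Complex.polarCoord.symm p) := by
        refine setLIntegral_congr_fun (measurableSet_Ioo.prod measurableSet_Ioo) fun p hp => ?_
        rw [smul_eq_mul, Complex.polarCoord_symm_eq_circleMap, indicator_of_mem (hmaps hp)]
    _ ≤ ∫⁻ p in polarCoord.target,
          ENNReal.ofReal p.1 • S.indicator F (Complex.polarCoord.symm p) :=
        lintegral_mono_set (prod_mono Ioo_subset_Ioi_self subset_rfl)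
    _ = ∫⁻ z in S, F z := by
        rw [Complex.lintegral_comp_polarCoord_symm, lintegral_indicator hS]

/-- If `f` is holomorphic on the punctured unit disk and `∫ |f(z)|² |z|^(-2t) dA < ∞` there,
then for every integer `n ≤ t - 1` the `n`-th Laurent coefficient
`(1/(2πi)) ∮_{|z|=r} f(z) z^(-n-1) dz` of `f` at `0` vanishes. -/
theorem stmt2 (f : ℂ → ℂ) (t : ℝ)
    (hf : DifferentiableOn ℂ f {z : ℂ | 0 < ‖z‖ ∧ ‖z‖ < 1})
    (hL2 : IntegrableOn (fun z : ℂ => ‖f z‖ ^ 2 * ‖z‖ ^ (-2 * t))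
      {z : ℂ | 0 < ‖z‖ ∧ ‖z‖ < 1} volume) :
    ∀ n : ℤ, (n : ℝ) ≤ t - 1 → ∀ r : ℝ, 0 < r → r < 1 →
      (2 * Real.pi * Complex.I)⁻¹ * (∮ z in C(0, r), f z * z ^ (-n - 1)) = 0 := by
  intro n hn r hr0 hr1
  have hzpow : DifferentiableOn ℂ (fun z : ℂ => z ^ (-n - 1)) {z : ℂ | 0 < ‖z‖ ∧ ‖z‖ < 1} :=
    differentiableOn_zpow _ _ (Or.inl fun h => by simp at h)
  have hF : ContinuousOn (fun z => ‖‖f z‖ ^ 2 * ‖z‖ ^ (-2 * t)‖ₑ) {z : ℂ | 0 < ‖z‖ ∧ ‖z‖ < 1} :=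
    continuous_enorm.comp_continuousOn ((hf.continuousOn.norm.pow 2).mul
      (continuous_norm.continuousOn.rpow_const fun z hz => Or.inl hz.1.ne'))
  suffices ‖∮ z in C(0, r), f z * z ^ (-n - 1)‖ₑ ^ 2 = 0 by
    rw [pow_eq_zero_iff two_ne_zero, enorm_eq_zero] at this
    rw [this, mul_zero]
  refine eq_zero_of_mul_le_of_lintegral_eq_top (μ := volume.restrict (Ioo 0 1))
    (C := ENNReal.ofReal (2 * π)) ?_
    (lintegral_Ioo_rpow_eq_top (a := 2 * n + 1 - 2 * t) (by linarith))
    ((lintegral_Ioo_mul_lintegral_circleMap_le hF).trans_lt hL2.2) ENNReal.ofReal_ne_top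
  refine (ae_restrict_iff' measurableSet_Ioo).2 (ae_of_all _ fun s hs => ?_)
  rw [circleIntegral_eq_of_differentiableOn_punctured_ball (g := fun z => f z * z ^ (-n - 1))
    (hf.mul hzpow) hr0 hr1 hs.1 hs.2]
  refine sq_enorm_circleIntegral_mul_zpow_mul_rpow_le hs.1 (hf.continuousOn.mono fun z hz => ?_) n t
  rw [mem_sphere_zero_iff_norm] at hz
  exact ⟨hz ▸ hs.1, hz ▸ hs.2⟩
end

section
/- For every real number t, the set of holomorphic functions f on the punctured unit disk satisfying ∫_{0<|z|<1/2} |f(z)|² |z|^(-2t) dA(z) < ∞ equals the set of functions of the form z^⌊t⌋ · g(z) restricted to the punctured disk, where g is holomorphic on the full unit disk and ∫_{|z|<1/2} |g(z)|² |z|^(2(⌊t⌋ - t)) dA(z) < ∞. -/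
open MeasureTheory

/-!
Write `m = ⌊t⌋`. On the punctured disc the substitution `f = z ^ m * g` turns the weight
`|z|^(-2t)` into `|z|^(2(m - t))`, so everything reduces to showing that `z ^ (-m) * f` extends
holomorphically across `0`. On the disc `B(c, |c|/2)` the modulus `|z|` is comparable to `|c|`,
so the sub-mean-value property of `|f|²` gives
`|f(c)|² |c|^(2 - 2t) ≤ C ∫_{0 < |z| < 2|c|} |f|² |z|^(-2t) → 0`.
Since `m ≤ t` this makes `z ^ (1 - m) * f(z) → 0`, and Riemann's removable singularity theorem
applies to `z ^ (-m) * f`.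
-/

open Set Metric Filter Real Topology Asymptotics
open scoped ENNReal

theorem rpow_le_max_rpow_mul_rpow {a b p q : ℝ} (s : ℝ) (hp : 0 < p) (ha : 0 < a)
    (hpb : p * a ≤ b) (hbq : b ≤ q * a) : b ^ s ≤ max (p ^ s) (q ^ s) * a ^ s := by
  have hpb' : p ≤ b / a := (le_div_iff₀ ha).2 hpb
  have hbq' : b / a ≤ q := (div_le_iff₀ ha).2 hbq
  calc b ^ s = (b / a) ^ s * a ^ s := by
        rw [← mul_rpow (hp.le.trans hpb') ha.le, div_mul_cancel₀ b ha.ne']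
    _ ≤ max (p ^ s) (q ^ s) * a ^ s := by
        gcongr
        rcases le_total 0 s with hs | hs
        · exact (rpow_le_rpow (hp.le.trans hpb') hbq' hs).trans (le_max_right _ _)
        · exact (rpow_le_rpow_of_nonpos hp hpb' hs).trans (le_max_left _ _)

theorem setOf_norm_pos_and_norm_lt {E : Type*} [NormedAddCommGroup E] (r : ℝ) :
    {z : E | 0 < ‖z‖ ∧ ‖z‖ < r} = ball 0 r \ {0} := by
  ext z
  simp [and_comm]

theorem setOf_norm_lt {E : Type*} [SeminormedAddCommGroup E] (r : ℝ) :
    {z : E | ‖z‖ < r} = ball 0 r := by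
  ext z
  simp

theorem norm_zpow_mul_sq_mul_rpow {z : ℂ} (hz : z ≠ 0) (m : ℤ) (w : ℂ) (t : ℝ) :
    ‖z ^ m * w‖ ^ 2 * ‖z‖ ^ (-2 * t) = ‖w‖ ^ 2 * ‖z‖ ^ (2 * (m - t)) := by
  have hz' : 0 < ‖z‖ := norm_pos_iff.2 hz
  rw [norm_mul, norm_zpow, ← rpow_intCast, mul_pow, ← rpow_natCast (‖z‖ ^ (m : ℝ)),
    ← rpow_mul hz'.le, show 2 * ((m : ℝ) - t) = m * (2 : ℕ) + -2 * t by push_cast; ring,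
    rpow_add hz']
  ring

section CircleAverage

variable {E : Type*} [NormedAddCommGroup E] [NormedSpace ℝ E]

theorem norm_circleAverage_le (f : ℂ → E) (c : ℂ) (R : ℝ) :
    ‖circleAverage f c R‖ ≤ circleAverage (fun z => ‖f z‖) c R := by
  rw [circleAverage_def, circleAverage_def, norm_smul, smul_eq_mul,
    Real.norm_of_nonneg (by positivity)]
  gcongr
  exact intervalIntegral.norm_integral_le_integral_norm (by positivity)

theorem DiffContOnCl.norm_sq_le_circleAverage {f : ℂ → ℂ} {c : ℂ} {R : ℝ}
    (hf : DiffContOnCl ℂ f (ball c |R|)) :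
    ‖f c‖ ^ 2 ≤ Real.circleAverage (fun z => ‖f z‖ ^ 2) c R := by
  have hsq : DiffContOnCl ℂ (fun z => f z ^ 2) (ball c |R|) :=
    ⟨hf.differentiableOn.pow 2, hf.continuousOn.pow 2⟩
  calc ‖f c‖ ^ 2 = ‖Real.circleAverage (fun z => f z ^ 2) c R‖ := by
        rw [hsq.circleAverage, norm_pow]
    _ ≤ Real.circleAverage (fun z => ‖f z‖ ^ 2) c R := by
        convert norm_circleAverage_le (fun z => f z ^ 2) c R using 3
        rw [norm_pow]

theorem circleMap_eq_add_polarCoord_symm (c : ℂ) (p : ℝ × ℝ) :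
    circleMap c p.1 p.2 = c + Complex.polarCoord.symm p := by
  simp [circleMap, Complex.polarCoord_symm_apply, Complex.exp_mul_I]

theorem dist_circleMap_center (c : ℂ) (ρ θ : ℝ) : dist (circleMap c ρ θ) c = |ρ| := by
  rw [dist_eq_norm, circleMap_sub_center, norm_circleMap_zero]

theorem setIntegral_Ioo_circleMap [CompleteSpace E] (g : ℂ → E) (c : ℂ) (ρ : ℝ) :
    ∫ θ in Ioo (-π) π, g (circleMap c ρ θ) = (2 * π) • circleAverage g c ρ := by
  rw [circleAverage_eq_integral_add (-π), smul_inv_smul₀ (by positivity),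
    intervalIntegral.integral_comp_add_right (fun θ => g (circleMap c ρ θ)),
    intervalIntegral.integral_of_le (by linarith [pi_pos]), integral_Ioc_eq_integral_Ioo]
  ring_nf

theorem setIntegral_ball_eq_intervalIntegral_circleAverage [CompleteSpace E] {g : ℂ → E}
    {c : ℂ} {r : ℝ} (hr : 0 ≤ r) (hg : ContinuousOn g (closedBall c r)) :
    ∫ z in ball c r, g z = ∫ ρ in 0..r, (2 * π * ρ) • circleAverage g c ρ := by
  set F : ℝ × ℝ → E := fun p => p.1 • g (circleMap c p.1 p.2)
  set T : Set (ℝ × ℝ) := Ioo 0 r ×ˢ Ioo (-π) π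
  have hT : MeasurableSet T := measurableSet_Ioo.prod measurableSet_Ioo
  have hF : IntegrableOn F T (volume.prod volume) := by
    have hmaps : MapsTo (fun p : ℝ × ℝ => circleMap c p.1 p.2) (Icc 0 r ×ˢ Icc (-π) π)
        (closedBall c r) := fun p hp => by
      rw [mem_closedBall, dist_circleMap_center, abs_of_nonneg hp.1.1]
      exact hp.1.2
    have hcont : ContinuousOn F (Icc 0 r ×ˢ Icc (-π) π) :=
      continuous_fst.continuousOn.smul (hg.comp (by fun_prop) hmaps)
    exact ((hcont.integrableOn_compact (isCompact_Icc.prod isCompact_Icc)).mono_set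
      (prod_mono Ioo_subset_Icc_self Ioo_subset_Icc_self))
  have hpolar : ∀ p ∈ polarCoord.target,
      p.1 • (ball c r).indicator g (c + Complex.polarCoord.symm p) = T.indicator F p := by
    rintro ⟨ρ, θ⟩ ⟨hρ, hθ⟩
    have hmem : circleMap c ρ θ ∈ ball c r ↔ (ρ, θ) ∈ T := by
      rw [mem_ball, dist_circleMap_center, abs_of_pos hρ]
      simp [T, hθ, mem_Ioi.1 hρ]
    rw [← circleMap_eq_add_polarCoord_symm]
    by_cases h : (ρ, θ) ∈ T
    · rw [indicator_of_mem (hmem.2 h), indicator_of_mem h]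
    · rw [indicator_of_notMem (mt hmem.1 h), indicator_of_notMem h, smul_zero]
  calc ∫ z in ball c r, g z = ∫ w, (ball c r).indicator g (c + w) := by
        rw [integral_add_left_eq_self, integral_indicator measurableSet_ball]
    _ = ∫ p in polarCoord.target, T.indicator F p := by
        rw [← Complex.integral_comp_polarCoord_symm]
        exact setIntegral_congr_fun polarCoord.open_target.measurableSet hpolar
    _ = ∫ p in T, F p ∂(volume.prod volume) := by
        rw [setIntegral_indicator hT, inter_eq_right.2, Measure.volume_eq_prod]
        exact polarCoord_target ▸ prod_mono Ioo_subset_Ioi_self subset_rfl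
    _ = ∫ ρ in Ioo 0 r, (2 * π * ρ) • circleAverage g c ρ := by
        rw [setIntegral_prod F hF]
        refine setIntegral_congr_fun measurableSet_Ioo fun ρ _ => ?_
        rw [integral_smul, setIntegral_Ioo_circleMap, smul_smul, mul_comm ρ]
    _ = ∫ ρ in 0..r, (2 * π * ρ) • circleAverage g c ρ := by
        rw [intervalIntegral.integral_of_le hr, integral_Ioc_eq_integral_Ioo]

end CircleAverage

theorem DifferentiableOn.mul_norm_sq_le_setIntegral_ball {f : ℂ → ℂ} {c : ℂ} {r : ℝ}
    (hr : 0 ≤ r) (hf : DifferentiableOn ℂ f (closedBall c r)) :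
    π * r ^ 2 * ‖f c‖ ^ 2 ≤ ∫ z in ball c r, ‖f z‖ ^ 2 := by
  have hcont : ContinuousOn (fun z => ‖f z‖ ^ 2) (closedBall c r) := hf.continuousOn.norm.pow 2
  have hmean : ∀ ρ ∈ Icc 0 r, ‖f c‖ ^ 2 ≤ circleAverage (fun z => ‖f z‖ ^ 2) c ρ := by
    intro ρ hρ
    refine DiffContOnCl.norm_sq_le_circleAverage (hf.mono ?_).diffContOnCl
    rw [abs_of_nonneg hρ.1]
    exact closure_ball_subset_closedBall.trans (closedBall_subset_closedBall hρ.2)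
  have hint : IntervalIntegrable
      (fun ρ => (2 * π * ρ) • circleAverage (fun z => ‖f z‖ ^ 2) c ρ) volume 0 r := by
    refine ContinuousOn.intervalIntegrable ?_
    rw [uIcc_of_le hr]
    refine (continuous_const.mul continuous_id).continuousOn.smul
      ((hcont.mono fun z hz => ?_).circleAverage fun ρ hρ => hρ.1)
    exact mem_closedBall.2 (dist_eq_norm z c ▸ hz.2)
  rw [setIntegral_ball_eq_intervalIntegral_circleAverage hr hcont]
  calc π * r ^ 2 * ‖f c‖ ^ 2 = ∫ ρ in 0..r, (2 * π * ρ) * ‖f c‖ ^ 2 := by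
        rw [intervalIntegral.integral_mul_const, intervalIntegral.integral_const_mul, integral_id]
        ring
    _ ≤ _ := intervalIntegral.integral_mono_on hr
        (Continuous.intervalIntegrable (by fun_prop) _ _) hint fun ρ hρ =>
          mul_le_mul_of_nonneg_left (hmean ρ hρ) (by have := hρ.1; positivity)

theorem Complex.tendsto_volume_ball_zero (x : ℂ) :
    Tendsto (fun r : ℝ => volume (ball x r)) (𝓝 0) (𝓝 0) := by
  have hcont : Continuous fun r : ℝ => ENNReal.ofReal r ^ 2 * (NNReal.pi : ℝ≥0∞) :=
    (ENNReal.continuous_mul_const ENNReal.coe_ne_top).comp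
      ((ENNReal.continuous_pow 2).comp ENNReal.continuous_ofReal)
  simpa only [Complex.volume_ball, ENNReal.ofReal_zero, zero_pow two_ne_zero, zero_mul]
    using hcont.tendsto 0

section PuncturedDisk

variable {f : ℂ → ℂ} {R s : ℝ}

theorem norm_sq_mul_rpow_le_setIntegral (hf : DifferentiableOn ℂ f (ball 0 R \ {0}))
    (hi : IntegrableOn (fun z => ‖f z‖ ^ 2 * ‖z‖ ^ s) (ball 0 R \ {0})) {c : ℂ} (hc : c ≠ 0)
    (hcR : 2 * ‖c‖ ≤ R) :
    ‖f c‖ ^ 2 * ‖c‖ ^ (s + 2) ≤ 4 / π * max (2⁻¹ ^ (-s)) ((3 / 2) ^ (-s)) *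
      ∫ z in ball 0 (2 * ‖c‖) \ {0}, ‖f z‖ ^ 2 * ‖z‖ ^ s := by
  set a := ‖c‖
  set K := max (2⁻¹ ^ (-s)) ((3 / 2 : ℝ) ^ (-s))
  set I := ∫ z in ball 0 (2 * a) \ {0}, ‖f z‖ ^ 2 * ‖z‖ ^ s
  have ha : 0 < a := norm_pos_iff.2 hc
  have hnorm : ∀ z ∈ closedBall c (a / 2), 2⁻¹ * a ≤ ‖z‖ ∧ ‖z‖ ≤ 3 / 2 * a := by
    intro z hz
    have := abs_le.1 ((abs_norm_sub_norm_le z c).trans (mem_closedBall_iff_norm.1 hz))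
    constructor <;> linarith [this.1, this.2]
  have hsub : closedBall c (a / 2) ⊆ ball 0 (2 * a) \ {0} := fun z hz => by
    refine ⟨mem_ball_zero_iff.2 (by linarith [(hnorm z hz).2]), fun h0 => ?_⟩
    linarith [(hnorm z hz).1, norm_eq_zero.2 (mem_singleton_iff.1 h0)]
  have hsubR : ball (0 : ℂ) (2 * a) \ {0} ⊆ ball 0 R \ {0} :=
    sdiff_subset_sdiff_left (ball_subset_ball hcR)
  have hdiff : DifferentiableOn ℂ f (closedBall c (a / 2)) := hf.mono (hsub.trans hsubR)
  have hweight : ∀ z ∈ ball c (a / 2), ‖f z‖ ^ 2 ≤ K * a ^ (-s) * (‖f z‖ ^ 2 * ‖z‖ ^ s) := by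
    intro z hz
    obtain ⟨hlow, hup⟩ := hnorm z (ball_subset_closedBall hz)
    have hz0 : 0 < ‖z‖ := lt_of_lt_of_le (by positivity) hlow
    calc ‖f z‖ ^ 2 = ‖f z‖ ^ 2 * ‖z‖ ^ s * ‖z‖ ^ (-s) := by
          rw [mul_assoc, ← rpow_add hz0, add_neg_cancel, rpow_zero, mul_one]
      _ ≤ ‖f z‖ ^ 2 * ‖z‖ ^ s * (K * a ^ (-s)) := by
          gcongr
          exact rpow_le_max_rpow_mul_rpow (-s) (by norm_num) ha hlow hup
      _ = K * a ^ (-s) * (‖f z‖ ^ 2 * ‖z‖ ^ s) := mul_comm _ _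
  have hball : π * (a / 2) ^ 2 * ‖f c‖ ^ 2 ≤ K * a ^ (-s) * I :=
    calc π * (a / 2) ^ 2 * ‖f c‖ ^ 2 ≤ ∫ z in ball c (a / 2), ‖f z‖ ^ 2 :=
          hdiff.mul_norm_sq_le_setIntegral_ball (by positivity)
      _ ≤ ∫ z in ball c (a / 2), K * a ^ (-s) * (‖f z‖ ^ 2 * ‖z‖ ^ s) :=
          setIntegral_mono_on
            ((hdiff.continuousOn.norm.pow 2).integrableOn_compact (isCompact_closedBall c _)
              |>.mono_set ball_subset_closedBall)
            ((hi.mono_set ((ball_subset_closedBall.trans hsub).trans hsubR)).const_mul _)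
            measurableSet_ball hweight
      _ ≤ K * a ^ (-s) * I := by
          rw [integral_const_mul]
          gcongr
          exact setIntegral_mono_set (hi.mono_set hsubR)
            (Eventually.of_forall fun z => by positivity)
            (ball_subset_closedBall.trans hsub).eventuallyLE
  calc ‖f c‖ ^ 2 * a ^ (s + 2) = 4 / π * a ^ s * (π * (a / 2) ^ 2 * ‖f c‖ ^ 2) := by
        rw [rpow_add ha, rpow_two]
        field_simp
        ring
    _ ≤ 4 / π * a ^ s * (K * a ^ (-s) * I) := by gcongr
    _ = 4 / π * K * I := by
        have hcancel : a ^ s * a ^ (-s) = 1 := by rw [← rpow_add ha, add_neg_cancel, rpow_zero]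
        linear_combination 4 / π * K * I * hcancel

theorem tendsto_rpow_mul_norm_nhdsNE_zero {t : ℝ} (hR : 0 < R)
    (hf : DifferentiableOn ℂ f (ball 0 R \ {0}))
    (hi : IntegrableOn (fun z => ‖f z‖ ^ 2 * ‖z‖ ^ (-2 * t)) (ball 0 R \ {0})) :
    Tendsto (fun z => ‖z‖ ^ (1 - t) * ‖f z‖) (𝓝[≠] 0) (𝓝 0) := by
  have hradius : Tendsto (fun c : ℂ => 2 * ‖c‖) (𝓝[≠] 0) (𝓝 0) := by
    simpa using ((continuous_norm.const_mul 2).tendsto (0 : ℂ)).mono_left nhdsWithin_le_nhds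
  have hsmall : ∀ᶠ c : ℂ in 𝓝[≠] 0, 2 * ‖c‖ ≤ R :=
    (hradius.eventually_lt_const hR).mono fun _ => le_of_lt
  have hvol : Tendsto (fun c : ℂ =>
      volume.restrict (ball (0 : ℂ) R \ {0}) (ball 0 (2 * ‖c‖) \ {0})) (𝓝[≠] 0) (𝓝 0) :=
    tendsto_of_tendsto_of_tendsto_of_le_of_le tendsto_const_nhds
      ((Complex.tendsto_volume_ball_zero 0).comp hradius) (fun _ => zero_le)
      fun _ => (Measure.restrict_apply_le _ _).trans (measure_mono sdiff_subset)
  have hI : Tendsto (fun c : ℂ => ∫ z in ball 0 (2 * ‖c‖) \ {0}, ‖f z‖ ^ 2 * ‖z‖ ^ (-2 * t))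
      (𝓝[≠] 0) (𝓝 0) := by
    refine (Integrable.tendsto_setIntegral_nhds_zero hi hvol).congr' ?_
    filter_upwards [hsmall] with c hc
    rw [Measure.restrict_restrict (measurableSet_ball.diff (measurableSet_singleton 0)),
      inter_eq_left.2 (sdiff_subset_sdiff_left (ball_subset_ball hc))]
  have hsq : Tendsto (fun z => ‖f z‖ ^ 2 * ‖z‖ ^ (-2 * t + 2)) (𝓝[≠] 0) (𝓝 0) := by
    refine squeeze_zero' (Eventually.of_forall fun z => by positivity) ?_
      (by simpa only [mul_zero] using
        hI.const_mul (4 / π * max (2⁻¹ ^ (-(-2 * t))) ((3 / 2 : ℝ) ^ (-(-2 * t)))))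
    filter_upwards [hsmall, self_mem_nhdsWithin] with c hcR hc
    exact norm_sq_mul_rpow_le_setIntegral hf hi hc hcR
  have hroot := hsq.sqrt
  rw [sqrt_zero] at hroot
  refine hroot.congr fun z => ?_
  rw [← sqrt_sq (by positivity : 0 ≤ ‖z‖ ^ (1 - t) * ‖f z‖), mul_pow,
    ← rpow_natCast (‖z‖ ^ (1 - t)), ← rpow_mul (norm_nonneg z)]
  ring_nf

end PuncturedDisk

theorem tendsto_zpow_one_sub_mul_nhdsNE_zero {f : ℂ → ℂ} {t : ℝ} {m : ℤ} (hm : (m : ℝ) ≤ t)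
    (h : Tendsto (fun z => ‖z‖ ^ (1 - t) * ‖f z‖) (𝓝[≠] 0) (𝓝 0)) :
    Tendsto (fun z => z ^ (1 - m) * f z) (𝓝[≠] 0) (𝓝 0) := by
  rw [tendsto_zero_iff_norm_tendsto_zero]
  refine squeeze_zero' (Eventually.of_forall fun z => norm_nonneg _) ?_ h
  have hnear : ∀ᶠ z : ℂ in 𝓝[≠] 0, ‖z‖ ≤ 1 :=
    nhdsWithin_le_nhds (eventually_norm_sub_lt 0 one_pos |>.mono fun z hz => by simpa using hz.le)
  filter_upwards [hnear, self_mem_nhdsWithin] with z hz1 hz0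
  rw [norm_mul, norm_zpow, ← rpow_intCast]
  refine mul_le_mul_of_nonneg_right
    (rpow_le_rpow_of_exponent_ge (norm_pos_iff.2 hz0) hz1 ?_) (norm_nonneg _)
  push_cast
  linarith

theorem exists_differentiableOn_eq_zpow_mul {f : ℂ → ℂ} {R : ℝ} {m : ℤ} (hR : 0 < R)
    (hf : DifferentiableOn ℂ f (ball 0 R \ {0}))
    (hlim : Tendsto (fun z => z ^ (1 - m) * f z) (𝓝[≠] 0) (𝓝 0)) :
    ∃ g : ℂ → ℂ, DifferentiableOn ℂ g (ball 0 R) ∧ ∀ z ∈ ball 0 R \ {0}, f z = z ^ m * g z := by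
  set g₀ : ℂ → ℂ := fun z => z ^ (-m) * f z
  have hg₀ : DifferentiableOn ℂ g₀ (ball 0 R \ {0}) := fun z hz =>
    (differentiableAt_zpow.2 (Or.inl hz.2)).differentiableWithinAt.mul (hf z hz)
  have hg₀_small : g₀ =o[𝓝[≠] 0] fun z => (z - 0)⁻¹ := by
    refine (isLittleO_iff_tendsto' ?_).2 ?_
    · filter_upwards [self_mem_nhdsWithin] with z hz h
      exact absurd (by simpa using h) hz
    refine hlim.congr' ?_
    filter_upwards [self_mem_nhdsWithin] with z hz
    rw [sub_zero, div_inv_eq_mul, sub_eq_add_neg, zpow_add₀ hz, zpow_one]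
    ring
  have hconst_small : (fun _ => g₀ 0) =o[𝓝[≠] 0] fun z : ℂ => (z - 0)⁻¹ :=
    isLittleO_const_left.2 <| Or.inr <| by
      simpa [Function.comp_def] using tendsto_norm_inv_nhdsNE_zero_atTop
  refine ⟨Function.update g₀ 0 (limUnder (𝓝[≠] 0) g₀),
    Complex.differentiableOn_update_limUnder_of_isLittleO (ball_mem_nhds 0 hR) hg₀
      (hg₀_small.sub hconst_small), fun z hz => ?_⟩
  rw [Function.update_of_ne hz.2, ← mul_assoc, ← zpow_add₀ hz.2, add_neg_cancel, zpow_zero,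
    one_mul]

theorem integrableOn_norm_sq_mul_rpow_iff {f g : ℂ → ℂ} {m : ℤ} {r t : ℝ}
    (hfg : ∀ z ∈ ball 0 r \ {0}, f z = z ^ m * g z) :
    IntegrableOn (fun z => ‖f z‖ ^ 2 * ‖z‖ ^ (-2 * t)) (ball 0 r \ {0}) ↔
      IntegrableOn (fun z => ‖g z‖ ^ 2 * ‖z‖ ^ (2 * (m - t))) (ball 0 r) := by
  have hnull : (ball (0 : ℂ) r \ {0} : Set ℂ) =ᵐ[volume] ball 0 r :=
    sdiff_null_ae_eq_self (measure_singleton 0)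
  rw [← integrableOn_congr_set_ae hnull]
  refine integrableOn_congr_fun (fun z hz => ?_)
    (measurableSet_ball.diff (measurableSet_singleton 0))
  rw [hfg z hz, norm_zpow_mul_sq_mul_rpow hz.2]

/-- For every `t : ℝ`, the set of holomorphic functions `f` on the punctured unit disk with
`∫_{0<|z|<1/2} |f(z)|² |z|^(-2t) dA < ∞` equals the set of functions of the form
`z^⌊t⌋ · g(z)` on the punctured disk, where `g` is holomorphic on the full unit disk and
`∫_{|z|<1/2} |g(z)|² |z|^(2(⌊t⌋ - t)) dA < ∞`. -/
theorem stmt4 (t : ℝ) :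
    {f : ℂ → ℂ | DifferentiableOn ℂ f {z : ℂ | 0 < ‖z‖ ∧ ‖z‖ < 1} ∧
        IntegrableOn (fun z : ℂ => ‖f z‖ ^ 2 * ‖z‖ ^ (-2 * t))
          {z : ℂ | 0 < ‖z‖ ∧ ‖z‖ < 1 / 2} volume}
      = {f : ℂ → ℂ | ∃ g : ℂ → ℂ,
          DifferentiableOn ℂ g {z : ℂ | ‖z‖ < 1} ∧
          IntegrableOn (fun z : ℂ => ‖g z‖ ^ 2 *
              ‖z‖ ^ (2 * ((⌊t⌋ : ℝ) - t)))
            {z : ℂ | ‖z‖ < 1 / 2} volume ∧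
          ∀ z ∈ {z : ℂ | 0 < ‖z‖ ∧ ‖z‖ < 1},
            f z = z ^ (⌊t⌋ : ℤ) * g z} := by
  simp only [setOf_norm_pos_and_norm_lt, setOf_norm_lt]
  have hhalf : ball (0 : ℂ) (1 / 2) \ {0} ⊆ ball 0 1 \ {0} :=
    sdiff_subset_sdiff_left (ball_subset_ball (by norm_num))
  ext f
  constructor
  · rintro ⟨hf, hi⟩
    obtain ⟨g, hg, hfg⟩ := exists_differentiableOn_eq_zpow_mul one_pos hf
      (tendsto_zpow_one_sub_mul_nhdsNE_zero (Int.floor_le t)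
        (tendsto_rpow_mul_norm_nhdsNE_zero (by norm_num) (hf.mono hhalf) hi))
    exact ⟨g, hg, (integrableOn_norm_sq_mul_rpow_iff fun z hz => hfg z (hhalf hz)).1 hi, hfg⟩
  · rintro ⟨g, hg, hgi, hfg⟩
    have hprod : DifferentiableOn ℂ (fun z => z ^ ⌊t⌋ * g z) (ball 0 1 \ {0}) := fun z hz =>
      (differentiableAt_zpow.2 (Or.inl hz.2)).differentiableWithinAt.mul (hg.mono sdiff_subset z hz)
    exact ⟨hprod.congr hfg,
      (integrableOn_norm_sq_mul_rpow_iff fun z hz => hfg z (hhalf hz)).2 hgi⟩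
end

section
/- Let A be an n×n complex matrix all of whose eigenvalues have absolute value 1, and let t ∈ ℝ. Then there exists an n×n complex matrix Γ such that exp(-2πi Γ) = A and every eigenvalue of Γ is a real number lying in the half-open interval (t-1, t]. -/
/-!
The roots `λ` of the characteristic polynomial `χ` of `A` give, by the Chinese remainder theorem
in `ℂ[X] ⧸ (χ)`, complete orthogonal idempotents `e_λ`, polynomial in `A`, such that
`(A - λ) e_λ` is nilpotent. Since `|λ| = 1` one can pick `a_λ ∈ (t - 1, t]` with
`exp (-2πi a_λ) = λ`; then `S = ∑ a_λ e_λ` has `exp (-2πi S) = ∑ λ e_λ`, and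
`A · (∑ λ e_λ)⁻¹` is unipotent. Newton's method applied to a truncated exponential series
yields a nilpotent logarithm `L` of it in the same commutative algebra, and `Γ = S + L / (-2πi)`
works: adding a commuting nilpotent does not change the spectrum `{a_λ}` of `S`.
-/

open Polynomial
open scoped Function Nat

theorem exists_mem_Ioc_exp_eq_of_norm_eq_one (t : ℝ) {z : ℂ} (hz : ‖z‖ = 1) :
    ∃ a ∈ Set.Ioc (t - 1) t, Complex.exp (-(2 * Real.pi * Complex.I) * a) = z := by
  set x := -Complex.arg z / (2 * Real.pi)
  refine ⟨toIocMod one_pos (t - 1) x, by simpa using toIocMod_mem_Ioc one_pos (t - 1) x, ?_⟩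
  have hx : (2 * Real.pi : ℂ) * x = -Complex.arg z := by
    exact_mod_cast mul_div_cancel₀ (-Complex.arg z) Real.two_pi_pos.ne'
  have hexponent : -(2 * Real.pi * Complex.I) * (toIocMod one_pos (t - 1) x : ℝ) =
      Complex.arg z * Complex.I + toIocDiv one_pos (t - 1) x * (2 * Real.pi * Complex.I) := by
    rw [toIocMod, zsmul_one]
    push_cast
    linear_combination (-Complex.I) * hx
  rw [hexponent, Complex.exp_add, Complex.exp_int_mul_two_pi_mul_I, mul_one]
  simpa [hz] using Complex.norm_mul_exp_arg_mul_I z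

theorem Ideal.exists_completeOrthogonalIdempotents_quotient_span_prod {R ι : Type*} [CommRing R]
    [Fintype ι] [DecidableEq ι] {f : ι → R} (hf : Pairwise (IsCoprime on f)) {q : R}
    (hq : ∏ i, f i = q) :
    ∃ e : ι → R ⧸ Ideal.span {q}, CompleteOrthogonalIdempotents e ∧
      ∀ i, Ideal.Quotient.mk _ (f i) * e i = 0 := by
  subst hq
  have hcop : Pairwise (IsCoprime on fun i => Ideal.span {f i}) := fun i j hij =>
    (Ideal.isCoprime_span_singleton_iff _ _).2 (hf hij)
  let crt : (R ⧸ Ideal.span {∏ i, f i}) ≃+* ∀ i, R ⧸ Ideal.span {f i} :=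
    (Ideal.quotEquivOfEq (Ideal.iInf_span_singleton fun _ _ hij => hf hij).symm).trans
      (Ideal.quotientInfRingEquivPiQuotient _ hcop)
  have hcrt (r : R) (j : ι) : crt (Ideal.Quotient.mk _ r) j = Ideal.Quotient.mk _ r := rfl
  refine ⟨crt.symm ∘ (Pi.single · 1),
    (CompleteOrthogonalIdempotents.single _).map crt.symm.toRingHom, fun i => crt.injective ?_⟩
  rw [map_mul, Function.comp_apply, crt.apply_symm_apply, map_zero]
  ext j
  rcases eq_or_ne j i with rfl | hji
  · simp [hcrt]
  · simp [hji]

theorem Polynomial.Monic.exists_completeOrthogonalIdempotents_quotient_span {K : Type*} [Field K]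
    [DecidableEq K] {p : K[X]} (hp : p.Monic) (hs : p.Splits) :
    ∃ e : p.roots.toFinset → K[X] ⧸ Ideal.span {p}, CompleteOrthogonalIdempotents e ∧
      ∀ r : p.roots.toFinset,
        IsNilpotent ((Ideal.Quotient.mk _ X - algebraMap K _ (r : K)) * e r) := by
  let f : p.roots.toFinset → K[X] := fun r => (X - C (r : K)) ^ p.roots.count (r : K)
  have hf : Pairwise (IsCoprime on f) := fun i j hij =>
    (pairwise_coprime_X_sub_C Subtype.val_injective hij).pow
  have hprod : ∏ r, f r = p := by
    rw [Finset.prod_coe_sort p.roots.toFinset fun r => (X - C r) ^ p.roots.count r,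
      ← Finset.prod_multiset_map_count, ← hs.eq_prod_roots_of_monic hp]
  obtain ⟨e, he, hfe⟩ := Ideal.exists_completeOrthogonalIdempotents_quotient_span_prod hf hprod
  refine ⟨e, he, fun r => ⟨p.roots.count (r : K) + 1, ?_⟩⟩
  have hroot : Ideal.Quotient.mk _ X - algebraMap K _ (r : K) =
      Ideal.Quotient.mk (Ideal.span {p}) (X - C (r : K)) := by
    rw [map_sub, ← algebraMap_eq, Ideal.Quotient.mk_algebraMap]
  rw [hroot, mul_pow, (he.idem r).pow_succ_eq, pow_succ, mul_right_comm, ← map_pow]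
  exact (congrArg (· * _) (hfe r)).trans (zero_mul _)

namespace CompleteOrthogonalIdempotents

variable {R ι : Type*} [Fintype ι] {e : ι → R}

noncomputable def piAlgHom [Semiring R] (he : CompleteOrthogonalIdempotents e) (K : Type*)
    [CommSemiring K] [Algebra K R] : (ι → K) →ₐ[K] R where
  toFun w := ∑ i, w i • e i
  map_one' := by simpa using he.complete
  map_mul' w v := by
    classical
    simp only [Pi.mul_apply, Finset.sum_mul, Finset.mul_sum, smul_mul_smul_comm, he.mul_eq,
      smul_ite, smul_zero, Finset.sum_ite_eq', Finset.mem_univ, if_true]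
  map_zero' := by simp
  map_add' w v := by simp [add_smul, Finset.sum_add_distrib]
  commutes' k := by simp [Algebra.algebraMap_eq_smul_one, ← Finset.smul_sum, he.complete]

theorem piAlgHom_apply {K : Type*} [CommSemiring K] [Semiring R] [Algebra K R]
    (he : CompleteOrthogonalIdempotents e) (w : ι → K) :
    he.piAlgHom K w = ∑ i, w i • e i := rfl

theorem isNilpotent_sub_piAlgHom {K : Type*} [CommSemiring K] [CommRing R] [Algebra K R]
    (he : CompleteOrthogonalIdempotents e) {x : R} {μ : ι → K}
    (hx : ∀ i, IsNilpotent ((x - algebraMap K R (μ i)) * e i)) :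
    IsNilpotent (x - he.piAlgHom K μ) := by
  have hsum : x - he.piAlgHom K μ = ∑ i, (x - algebraMap K R (μ i)) * e i := by
    simp only [sub_mul, Finset.sum_sub_distrib, ← Finset.mul_sum, he.complete, mul_one,
      piAlgHom_apply, Algebra.smul_def]
  rw [hsum]
  exact isNilpotent_sum fun i _ => hx i

theorem spectrum_piAlgHom_add_subset {K : Type*} [Field K] [CommRing R] [Algebra K R]
    (he : CompleteOrthogonalIdempotents e) (w : ι → K) {y : R} (hy : IsNilpotent y) :
    spectrum K (he.piAlgHom K w + y) ⊆ Set.range w := by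
  intro z hz
  by_contra hzw
  have hunit : IsUnit (algebraMap K (ι → K) z - w) :=
    Pi.isUnit_iff.2 fun i => (sub_ne_zero.2 fun h => hzw ⟨i, h.symm⟩).isUnit
  refine hz ?_
  rw [spectrum.mem_resolventSet_iff, ← sub_sub, ← AlgHom.commutes (he.piAlgHom K), ← map_sub,
    sub_eq_add_neg]
  exact hy.neg.isUnit_add_left_of_commute (hunit.map (he.piAlgHom K)) (Commute.all _ _)

end CompleteOrthogonalIdempotents

/-- A truncation `P` of the exponential series has `P' (0) = 1` once it keeps the linear term,
so Newton's method turns the approximate root `0` of `P - u` into an exact one. -/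
theorem exists_isNilpotent_sum_range_eq_of_isNilpotent_sub_one {K R : Type*} [Field K]
    [CharZero K] [CommRing R] [Algebra K R] {u : R} (hu : IsNilpotent (u - 1)) {N : ℕ}
    (hN : 2 ≤ N) : ∃ y : R, IsNilpotent y ∧ ∑ i ∈ Finset.range N, (i ! : K)⁻¹ • y ^ i = u := by
  let P : R[X] := ∑ i ∈ Finset.range N, C ((i ! : K)⁻¹ • 1 : R) * X ^ i - C u
  have hP (y : R) : aeval y P = ∑ i ∈ Finset.range N, (i ! : K)⁻¹ • y ^ i - u := by
    simp only [P, map_sub, map_sum, map_mul, aeval_C, aeval_X_pow, Algebra.algebraMap_self,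
      RingHom.id_apply, smul_one_mul]
  obtain ⟨M, rfl⟩ : ∃ M, N = M + 2 := ⟨N - 2, by omega⟩
  have hP0 : aeval (0 : R) P = -(u - 1) := by
    rw [hP, Finset.sum_range_succ']
    simp
  have hP'0 : aeval (0 : R) (derivative P) = 1 := by
    rw [aeval_def, eval₂_at_zero, coeff_derivative]
    simp [P, Finset.sum_range_succ', coeff_X_pow, coeff_one]
  obtain ⟨y, hy, hPy⟩ := (existsUnique_nilpotent_sub_and_aeval_eq_zero
    (hP0 ▸ hu.neg) (hP'0 ▸ isUnit_one)).exists
  exact ⟨y, by simpa using hy, sub_eq_zero.1 ((hP y).symm.trans hPy)⟩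

theorem NormedSpace.exp_eq_sum_range_of_pow_eq_zero (𝕂 : Type*) {𝔸 : Type*} [Field 𝕂]
    [CharZero 𝕂] [Ring 𝔸] [Algebra 𝕂 𝔸] [TopologicalSpace 𝔸] [IsTopologicalRing 𝔸] {a : 𝔸}
    {N : ℕ} (h : a ^ N = 0) :
    exp a = ∑ i ∈ Finset.range N, (i ! : 𝕂)⁻¹ • a ^ i := by
  rw [exp_eq_tsum 𝕂]
  exact tsum_eq_sum fun i hi => by
    rw [pow_eq_zero_of_le (by simpa using hi) h, smul_zero]

theorem Matrix.pow_card_eq_zero_of_isNilpotent {K m : Type*} [Field K] [Fintype m]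
    [DecidableEq m] {M : Matrix m m K} (hM : IsNilpotent M) : M ^ Fintype.card m = 0 := by
  have hχ : M.charpoly = X ^ Fintype.card m :=
    sub_eq_zero.1 (Matrix.isNilpotent_charpoly_sub_pow_of_isNilpotent hM).eq_zero
  simpa [hχ] using M.aeval_self_charpoly

theorem Matrix.exp_algHom_pi {ι m : Type*} [Fintype ι] [Fintype m] [DecidableEq m]
    (Ψ : (ι → ℂ) →ₐ[ℂ] Matrix m m ℂ) (w : ι → ℂ) :
    NormedSpace.exp (Ψ w) = Ψ fun i => Complex.exp (w i) := by
  -- `NormedSpace.exp` does not depend on the norm, so any matrix norm will do.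
  let _ : NormedRing (Matrix m m ℂ) := Matrix.linftyOpNormedRing
  let _ : NormedAlgebra ℂ (Matrix m m ℂ) := Matrix.linftyOpNormedAlgebra
  have h := NormedSpace.map_exp Ψ Ψ.toLinearMap.continuous_of_finiteDimensional w
  rw [Pi.exp_def] at h
  simp only [← Complex.exp_eq_exp_ℂ] at h
  exact h.symm

/-- The logarithm is `∑ w_i e_i + c⁻¹ y`, where `y` is a nilpotent logarithm of the unipotent
element `x · ∑ exp (-c w_i) e_i`. -/
theorem CompleteOrthogonalIdempotents.exists_exp_smul_eq_and_spectrum_subset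
    {R ι m : Type*} [CommRing R] [Algebra ℂ R] [Fintype ι] [Fintype m] [DecidableEq m]
    {e : ι → R} (he : CompleteOrthogonalIdempotents e) (ρ : R →ₐ[ℂ] Matrix m m ℂ) {x : R}
    {c : ℂ} (hc : c ≠ 0) {w : ι → ℂ}
    (hx : ∀ i, IsNilpotent ((x - algebraMap ℂ R (Complex.exp (c * w i))) * e i)) :
    ∃ Γ : Matrix m m ℂ, NormedSpace.exp (c • Γ) = ρ x ∧ spectrum ℂ Γ ⊆ Set.range w := by
  set ψ := he.piAlgHom ℂ
  have hinv : ψ (fun i => Complex.exp (c * w i)) * ψ (fun i => Complex.exp (-(c * w i))) = 1 := by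
    rw [← map_mul, ← map_one ψ]
    congr 1
    ext i
    simp [← Complex.exp_add]
  have hu : IsNilpotent (x * ψ (fun i => Complex.exp (-(c * w i))) - 1) := by
    rw [← hinv, ← sub_mul]
    exact (Commute.all _ _).isNilpotent_mul_right (he.isNilpotent_sub_piAlgHom hx)
  obtain ⟨y, hy, hyu⟩ := exists_isNilpotent_sum_range_eq_of_isNilpotent_sub_one (K := ℂ) hu
    (N := Fintype.card m + 2) (by omega)
  refine ⟨ρ (ψ w + c⁻¹ • y), ?_, ?_⟩
  · have hsplit : c • ρ (ψ w + c⁻¹ • y) = ρ (ψ (c • w)) + ρ y := by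
      rw [← map_smul, smul_add, smul_inv_smul₀ hc, map_smul, map_add]
    have hyN : ρ y ^ (Fintype.card m + 2) = 0 :=
      pow_eq_zero_of_le (by omega) (Matrix.pow_card_eq_zero_of_isNilpotent (hy.map ρ))
    rw [hsplit, Matrix.exp_add_of_commute _ _ ((Commute.all _ _).map ρ), ← AlgHom.comp_apply,
      Matrix.exp_algHom_pi, NormedSpace.exp_eq_sum_range_of_pow_eq_zero ℂ hyN]
    simp only [← map_pow, ← map_smul, ← map_sum, hyu, AlgHom.comp_apply, ← map_mul]
    rw [mul_left_comm]
    exact congrArg ρ ((congrArg (x * ·) hinv).trans (mul_one x))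
  · exact (AlgHom.spectrum_apply_subset ρ _).trans
      (he.spectrum_piAlgHom_add_subset w (hy.smul c⁻¹))

/-- Let `A` be an `n × n` complex matrix all of whose eigenvalues have absolute value `1`,
and `t : ℝ`. Then there is an `n × n` complex matrix `Γ` with `exp(-2πi Γ) = A` whose
eigenvalues are all real numbers in the half-open interval `(t - 1, t]`. -/
theorem stmt11 (n : ℕ) (A : Matrix (Fin n) (Fin n) ℂ)
    (hA : ∀ μ ∈ spectrum ℂ A, ‖μ‖ = 1) (t : ℝ) :
    ∃ Γ : Matrix (Fin n) (Fin n) ℂ,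
      NormedSpace.exp ((-(2 * Real.pi * Complex.I)) • Γ) = A ∧
      ∀ μ ∈ spectrum ℂ Γ, ∃ a : ℝ, μ = (a : ℂ) ∧ t - 1 < a ∧ a ≤ t := by
  obtain ⟨e, he, hnil⟩ :=
    A.charpoly_monic.exists_completeOrthogonalIdempotents_quotient_span (IsAlgClosed.splits _)
  let ρ : ℂ[X] ⧸ Ideal.span {A.charpoly} →ₐ[ℂ] Matrix (Fin n) (Fin n) ℂ :=
    Ideal.Quotient.liftₐ _ (aeval A) fun p hp => by
      obtain ⟨q, rfl⟩ := Ideal.mem_span_singleton.1 hp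
      rw [map_mul, A.aeval_self_charpoly, zero_mul]
  have hnorm (r : A.charpoly.roots.toFinset) : ‖(r : ℂ)‖ = 1 :=
    hA r <| Matrix.mem_spectrum_iff_isRoot_charpoly.2 <|
      (mem_roots A.charpoly_monic.ne_zero).1 (Multiset.mem_toFinset.1 r.2)
  choose a ha hexp using fun r => exists_mem_Ioc_exp_eq_of_norm_eq_one t (hnorm r)
  have hc : -(2 * Real.pi * Complex.I) ≠ 0 := by simp [Real.pi_ne_zero]
  obtain ⟨Γ, hΓ, hspec⟩ := he.exists_exp_smul_eq_and_spectrum_subset ρ hc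
    (w := fun r => (a r : ℂ)) (by simpa only [hexp] using hnil)
  refine ⟨Γ, hΓ.trans (aeval_X A), fun μ hμ => ?_⟩
  obtain ⟨r, rfl⟩ := hspec hμ
  exact ⟨a r, rfl, ha r⟩
end
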